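/- Let k ≥ 4 be an integer and let s = s_crit(k) = max(1-2/(k-1), 3/4-1/(k-1), 0). Then there exist an s-admissible pair (q,r) and a dual s-admissible pair (q̃,r̃) with q ≥ k·q̃ and r ≥ k·r̃. -/
import Mathlib


open ENNReal

/-- `(q,r)` is `s`-admissible: `2 < q ≤ ∞`, `2 ≤ r < ∞`,
`1/q + 2/r = 1 - s`, `2/q + 1/r ≤ 1/2`. -/
def IsAdmissible (s : ℝ) (q r : ℝ≥0∞) : Prop :=
  2 < q ∧ 2 ≤ r ∧ r < ⊤ ∧ 1 / q + 2 / r = ENNReal.ofReal (1 - s) ∧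
    2 / q + 1 / r ≤ 1 / 2

/-- `(q̃,r̃)` is dual `s`-admissible: `1 ≤ q̃ < 2`, `1 < r̃ ≤ 2`,
`1/q̃ + 2/r̃ = 3 - s`, `2/q̃ + 1/r̃ ≥ 5/2`. -/
def IsDualAdmissible (s : ℝ) (qt rt : ℝ≥0∞) : Prop :=
  1 ≤ qt ∧ qt < 2 ∧ 1 < rt ∧ rt ≤ 2 ∧
    1 / qt + 2 / rt = ENNReal.ofReal (3 - s) ∧ 5 / 2 ≤ 2 / qt + 1 / rt

lemma build (s n q0 r0 qt0 rt0 : ℝ)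
    (hq0 : 2 < q0) (hr0 : 2 ≤ r0)
    (hae : 1/q0 + 2/r0 = 1 - s)
    (hal : 2/q0 + 1/r0 ≤ 1/2)
    (hqt1 : 1 ≤ qt0) (hqt2 : qt0 < 2) (hrt1 : 1 < rt0) (hrt2 : rt0 ≤ 2)
    (hde : 1/qt0 + 2/rt0 = 3 - s)
    (hdg : 5/2 ≤ 2/qt0 + 1/rt0)
    (hkq : n * qt0 ≤ q0) (hkr : n * rt0 ≤ r0) (hn : 0 ≤ n) :
    IsAdmissible s (ENNReal.ofReal q0) (ENNReal.ofReal r0) ∧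
    IsDualAdmissible s (ENNReal.ofReal qt0) (ENNReal.ofReal rt0) ∧
    ENNReal.ofReal n * ENNReal.ofReal qt0 ≤ ENNReal.ofReal q0 ∧
    ENNReal.ofReal n * ENNReal.ofReal rt0 ≤ ENNReal.ofReal r0 := by
  have hq0p : (0:ℝ) < q0 := by linarith
  have hr0p : (0:ℝ) < r0 := by linarith
  have hqtp : (0:ℝ) < qt0 := by linarith
  have hrtp : (0:ℝ) < rt0 := by linarith
  have e1 : (1 : ℝ≥0∞) / ENNReal.ofReal q0 = ENNReal.ofReal (1/q0) := by
    rw [ENNReal.ofReal_div_of_pos hq0p]; norm_num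
  have e2 : (2 : ℝ≥0∞) / ENNReal.ofReal r0 = ENNReal.ofReal (2/r0) := by
    rw [ENNReal.ofReal_div_of_pos hr0p]; norm_num
  have e3 : (2 : ℝ≥0∞) / ENNReal.ofReal q0 = ENNReal.ofReal (2/q0) := by
    rw [ENNReal.ofReal_div_of_pos hq0p]; norm_num
  have e4 : (1 : ℝ≥0∞) / ENNReal.ofReal r0 = ENNReal.ofReal (1/r0) := by
    rw [ENNReal.ofReal_div_of_pos hr0p]; norm_num
  have f1 : (1 : ℝ≥0∞) / ENNReal.ofReal qt0 = ENNReal.ofReal (1/qt0) := by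
    rw [ENNReal.ofReal_div_of_pos hqtp]; norm_num
  have f2 : (2 : ℝ≥0∞) / ENNReal.ofReal rt0 = ENNReal.ofReal (2/rt0) := by
    rw [ENNReal.ofReal_div_of_pos hrtp]; norm_num
  have f3 : (2 : ℝ≥0∞) / ENNReal.ofReal qt0 = ENNReal.ofReal (2/qt0) := by
    rw [ENNReal.ofReal_div_of_pos hqtp]; norm_num
  have f4 : (1 : ℝ≥0∞) / ENNReal.ofReal rt0 = ENNReal.ofReal (1/rt0) := by
    rw [ENNReal.ofReal_div_of_pos hrtp]; norm_num
  refine ⟨⟨?_, ?_, ENNReal.ofReal_lt_top, ?_, ?_⟩, ⟨?_, ?_, ?_, ?_, ?_, ?_⟩, ?_, ?_⟩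
  · rw [show (2:ℝ≥0∞) = ENNReal.ofReal 2 by norm_num]
    exact ENNReal.ofReal_lt_ofReal_iff hq0p |>.2 hq0
  · rw [show (2:ℝ≥0∞) = ENNReal.ofReal 2 by norm_num]
    exact ENNReal.ofReal_le_ofReal hr0
  · rw [e1, e2, ← ENNReal.ofReal_add (by positivity) (by positivity), hae]
  · rw [e3, e4, ← ENNReal.ofReal_add (by positivity) (by positivity),
      show (1:ℝ≥0∞)/2 = ENNReal.ofReal (1/2) by rw [ENNReal.ofReal_div_of_pos (by norm_num : (0:ℝ)<2)]; norm_num]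
    exact ENNReal.ofReal_le_ofReal hal
  · rw [show (1:ℝ≥0∞) = ENNReal.ofReal 1 by norm_num]
    exact ENNReal.ofReal_le_ofReal hqt1
  · rw [show (2:ℝ≥0∞) = ENNReal.ofReal 2 by norm_num]
    exact ENNReal.ofReal_lt_ofReal_iff (by norm_num) |>.2 hqt2
  · rw [show (1:ℝ≥0∞) = ENNReal.ofReal 1 by norm_num]
    exact ENNReal.ofReal_lt_ofReal_iff hrtp |>.2 hrt1
  · rw [show (2:ℝ≥0∞) = ENNReal.ofReal 2 by norm_num]
    exact ENNReal.ofReal_le_ofReal hrt2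
  · rw [f1, f2, ← ENNReal.ofReal_add (by positivity) (by positivity), hde]
  · rw [f3, f4, ← ENNReal.ofReal_add (by positivity) (by positivity),
      show (5:ℝ≥0∞)/2 = ENNReal.ofReal (5/2) by rw [ENNReal.ofReal_div_of_pos (by norm_num : (0:ℝ)<2)]; norm_num]
    exact ENNReal.ofReal_le_ofReal hdg
  · rw [← ENNReal.ofReal_mul hn]
    exact ENNReal.ofReal_le_ofReal hkq
  · rw [← ENNReal.ofReal_mul hn]
    exact ENNReal.ofReal_le_ofReal hkr

/-- For an integer `k ≥ 4` and `s = s_crit(k) = max(1-2/(k-1), 3/4-1/(k-1), 0)`,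
there exist an `s`-admissible pair `(q,r)` and a dual `s`-admissible pair
`(q̃,r̃)` with `q ≥ k q̃` and `r ≥ k r̃`. -/
theorem exists_admissible_pairs_critical (k : ℕ) (hk : 4 ≤ k) :
    ∃ q r qt rt : ℝ≥0∞,
      IsAdmissible (max (max (1 - 2 / ((k : ℝ) - 1)) (3 / 4 - 1 / ((k : ℝ) - 1))) 0) q r ∧
      IsDualAdmissible (max (max (1 - 2 / ((k : ℝ) - 1)) (3 / 4 - 1 / ((k : ℝ) - 1))) 0) qt rt ∧
      (k : ℝ≥0∞) * qt ≤ q ∧ (k : ℝ≥0∞) * rt ≤ r := by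
  have hcast : (k : ℝ≥0∞) = ENNReal.ofReal (k : ℝ) := (ENNReal.ofReal_natCast k).symm
  rw [hcast]
  rcases eq_or_lt_of_le hk with h4 | h5
  · -- k = 4
    have hk4 : (k : ℝ) = 4 := by exact_mod_cast h4.symm
    rw [hk4]
    have hs : (max (max (1 - 2 / ((4:ℝ) - 1)) (3 / 4 - 1 / ((4:ℝ) - 1))) 0) = 5/12 := by
      norm_num
    rw [hs]
    exact ⟨_, _, _, _, build (5/12) 4 (36/5) (9/2) (36/29) (9/8)
      (by norm_num) (by norm_num) (by norm_num) (by norm_num) (by norm_num)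
      (by norm_num) (by norm_num) (by norm_num) (by norm_num) (by norm_num)
      (by norm_num) (by norm_num) (by norm_num)⟩
  · -- k ≥ 5
    set n : ℝ := (k : ℝ) with hn
    have hk5 : 5 ≤ k := h5
    have hn5 : (5:ℝ) ≤ n := by rw [hn]; exact_mod_cast hk5
    have hd1 : (0:ℝ) < n - 1 := by linarith
    have hd2 : (0:ℝ) < 3*n - 5 := by linarith
    have hd3 : (0:ℝ) < 3*n + 5 := by linarith
    have hnp : (0:ℝ) < n := by linarith
    have hm1 : 3/4 - 1/(n-1) ≤ 1 - 2/(n-1) := by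
      have h' : 1/(n-1) ≤ 1/4 := by rw [div_le_div_iff₀ hd1 (by norm_num)]; linarith
      have h2 : 2/(n-1) = 2*(1/(n-1)) := by ring
      linarith
    have hm0 : (0:ℝ) ≤ 1 - 2/(n-1) := by
      have : 2/(n-1) ≤ 2/4 := by rw [div_le_div_iff₀ hd1 (by norm_num)]; linarith
      linarith
    rw [max_eq_left hm1, max_eq_left hm0]
    refine ⟨_, _, _, _, build (1 - 2/(n-1)) n (3*n*(n-1)/(3*n-5)) (6*n*(n-1)/(3*n+5))
      (3*(n-1)/(3*n-5)) (6*(n-1)/(3*n+5)) ?_ ?_ ?_ ?_ ?_ ?_ ?_ ?_ ?_ ?_ ?_ ?_ (by linarith)⟩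
    · rw [lt_div_iff₀ hd2]; nlinarith
    · rw [le_div_iff₀ hd3]; nlinarith
    · field_simp
      ring
    · have e : 2/(3*n*(n-1)/(3*n-5)) + 1/(6*n*(n-1)/(3*n+5)) = 5/(2*n) := by
        field_simp; ring
      rw [e, div_le_div_iff₀ (by positivity) (by norm_num)]; linarith
    · rw [le_div_iff₀ hd2]; linarith
    · rw [div_lt_iff₀ hd2]; linarith
    · rw [lt_div_iff₀ hd3]; linarith
    · rw [div_le_iff₀ hd3]; linarith
    · field_simp
      ring
    · have e : 2/(3*(n-1)/(3*n-5)) + 1/(6*(n-1)/(3*n+5)) = 5/2 := by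
        field_simp; ring
      rw [e]
    · exact le_of_eq (by ring)
    · exact le_of_eq (by ring)
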